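/- arXiv:2510.12735 — 3 statements merged into one kernel-verified Lean document; each statement's English description precedes it below -/
import Mathlib

section
/- Let ξ, α ∈ ℝ³ with ξ ≠ 0, let ρ̇ ∈ ℝ (identified with a 3-form on ℝ³ via the volume form), and let c > 0. If the 2-form −ξ ∧ α + ι_{ξ}(ρ̇·vol) vanishes and c·⟨ξ, α⟩ = 0, then α = 0 and ρ̇ = 0. Consequently, the linear map (α, ρ̇) ↦ (−ξ ∧ α + ι_ξ(ρ̇·vol), c·⟨ξ,α⟩) from ℝ³ ⊕ ℝ to Λ²(ℝ³)* ⊕ ℝ is a linear isomorphism. -/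
set_option maxHeartbeats 1000000

open Matrix

/-- The wedge `(ξ♭ ∧ α♭)(v, w)` of the covectors corresponding to `ξ, α ∈ ℝ³`. -/
noncomputable def wedge3 (ξ α v w : Fin 3 → ℝ) : ℝ :=
  (ξ ⬝ᵥ v) * (α ⬝ᵥ w) - (ξ ⬝ᵥ w) * (α ⬝ᵥ v)

/-- `(ι_ξ vol)(v, w) = det(ξ, v, w)` for the standard volume form on ℝ³. -/
noncomputable def volContract (ξ v w : Fin 3 → ℝ) : ℝ :=
  Matrix.det (Matrix.of ![ξ, v, w])

private lemma key_lemma (ξ α : Fin 3 → ℝ) (ρ : ℝ) (hξ : ξ ≠ 0)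
    (hvanish : ∀ v w, -wedge3 ξ α v w + ρ * volContract ξ v w = 0)
    (hinner : ξ ⬝ᵥ α = 0) : α = 0 ∧ ρ = 0 := by
  have hn : ξ 0 ^ 2 + ξ 1 ^ 2 + ξ 2 ^ 2 ≠ 0 := by
    intro h
    apply hξ
    have h0 : ξ 0 = 0 := by nlinarith [sq_nonneg (ξ 0), sq_nonneg (ξ 1), sq_nonneg (ξ 2)]
    have h1 : ξ 1 = 0 := by nlinarith [sq_nonneg (ξ 0), sq_nonneg (ξ 1), sq_nonneg (ξ 2)]
    have h2 : ξ 2 = 0 := by nlinarith [sq_nonneg (ξ 0), sq_nonneg (ξ 1), sq_nonneg (ξ 2)]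
    funext i; fin_cases i
    · exact h0
    · exact h1
    · exact h2
  have hi' : ξ 0 * α 0 + ξ 1 * α 1 + ξ 2 * α 2 = 0 := by
    simpa [dotProduct, Fin.sum_univ_three] using hinner
  have hA := hvanish ξ ![1,0,0]
  have hB := hvanish ξ ![0,1,0]
  have hC := hvanish ξ ![0,0,1]
  simp [wedge3, volContract, Matrix.det_fin_three, dotProduct, Fin.sum_univ_three] at hA hB hC
  have hα0 : α 0 = 0 := by
    have : (ξ 0 ^ 2 + ξ 1 ^ 2 + ξ 2 ^ 2) * α 0 = 0 := by linear_combination -hA + ξ 0 * hi'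
    exact (mul_eq_zero.mp this).resolve_left hn
  have hα1 : α 1 = 0 := by
    have : (ξ 0 ^ 2 + ξ 1 ^ 2 + ξ 2 ^ 2) * α 1 = 0 := by linear_combination -hB + ξ 1 * hi'
    exact (mul_eq_zero.mp this).resolve_left hn
  have hα2 : α 2 = 0 := by
    have : (ξ 0 ^ 2 + ξ 1 ^ 2 + ξ 2 ^ 2) * α 2 = 0 := by linear_combination -hC + ξ 2 * hi'
    exact (mul_eq_zero.mp this).resolve_left hn
  have h01 := hvanish ![1,0,0] ![0,1,0]
  have h12 := hvanish ![0,1,0] ![0,0,1]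
  have h20 := hvanish ![0,0,1] ![1,0,0]
  simp [wedge3, volContract, Matrix.det_fin_three, dotProduct, Fin.sum_univ_three,
    Matrix.vecHead, Matrix.vecTail, Function.comp] at h01 h12 h20
  constructor
  · funext i; fin_cases i
    · exact hα0
    · exact hα1
    · exact hα2
  · have : ρ * (ξ 0 ^ 2 + ξ 1 ^ 2 + ξ 2 ^ 2) = 0 := by
      linear_combination ξ 0 * h12 + ξ 1 * h20 + ξ 2 * h01 +
        (ξ 1 * ξ 2 - ξ 2 * ξ 1) * hα0 + (ξ 2 * ξ 0 - ξ 0 * ξ 2) * hα1 +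
        (ξ 0 * ξ 1 - ξ 1 * ξ 0) * hα2
    exact (mul_eq_zero.mp this).resolve_right hn

private lemma surj_lemma (ξ : Fin 3 → ℝ) (c s : ℝ) (hξ : ξ ≠ 0) (hc : 0 < c)
    (B : (Fin 3 → ℝ) → (Fin 3 → ℝ) → ℝ)
    (hanti : ∀ v w, B v w = -B w v)
    (hlin : ∀ (a : ℝ) (v v' w : Fin 3 → ℝ), B (a • v + v') w = a * B v w + B v' w) :
    ∃ p : (Fin 3 → ℝ) × ℝ,
      (∀ v w, -wedge3 ξ p.1 v w + p.2 * volContract ξ v w = B v w) ∧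
        c * (ξ ⬝ᵥ p.1) = s := by
  have hn : ξ 0 ^ 2 + ξ 1 ^ 2 + ξ 2 ^ 2 ≠ 0 := by
    intro h
    apply hξ
    have h0 : ξ 0 = 0 := by nlinarith [sq_nonneg (ξ 0), sq_nonneg (ξ 1), sq_nonneg (ξ 2)]
    have h1 : ξ 1 = 0 := by nlinarith [sq_nonneg (ξ 0), sq_nonneg (ξ 1), sq_nonneg (ξ 2)]
    have h2 : ξ 2 = 0 := by nlinarith [sq_nonneg (ξ 0), sq_nonneg (ξ 1), sq_nonneg (ξ 2)]
    funext i; fin_cases i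
    · exact h0
    · exact h1
    · exact h2
  have hB0 : ∀ w, B 0 w = 0 := by
    intro w
    have h := hlin 1 0 0 w
    simp at h
    linarith
  have hsmul : ∀ (a : ℝ) v w, B (a • v) w = a * B v w := by
    intro a v w
    have h := hlin a v 0 w
    simpa [hB0] using h
  have hadd : ∀ v v' w, B (v + v') w = B v w + B v' w := by
    intro v v' w
    simpa using hlin 1 v v' w
  have hself : ∀ v, B v v = 0 := by
    intro v; have := hanti v v; linarith
  have hdecomp : ∀ v : Fin 3 → ℝ,
      v = v 0 • ![1,0,0] + v 1 • ![0,1,0] + v 2 • ![0,0,1] := by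
    intro v; funext i; fin_cases i <;> simp
  have hexp1 : ∀ v w, B v w =
      v 0 * B ![1,0,0] w + v 1 * B ![0,1,0] w + v 2 * B ![0,0,1] w := by
    intro v w
    conv_lhs => rw [hdecomp v]
    rw [hadd, hadd, hsmul, hsmul, hsmul]
  set b0 := B ![0,1,0] ![0,0,1] with hb0
  set b1 := B ![0,0,1] ![1,0,0] with hb1
  set b2 := B ![1,0,0] ![0,1,0] with hb2
  have f0 : ∀ w, B ![1,0,0] w = w 1 * b2 - w 2 * b1 := by
    intro w
    have h := hexp1 w ![1,0,0]
    have h' := hanti ![1,0,0] w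
    have hx := hanti ![0,1,0] ![1,0,0]
    have hz := hself ![1,0,0]
    linear_combination h' - h - w 1 * hx - w 0 * hz + w 2 * hb1.symm
  have f1 : ∀ w, B ![0,1,0] w = w 2 * b0 - w 0 * b2 := by
    intro w
    have h := hexp1 w ![0,1,0]
    have h' := hanti ![0,1,0] w
    have hx := hanti ![0,0,1] ![0,1,0]
    have hz := hself ![0,1,0]
    linear_combination h' - h - w 2 * hx - w 1 * hz + w 0 * hb2.symm
  have f2 : ∀ w, B ![0,0,1] w = w 0 * b1 - w 1 * b0 := by
    intro w
    have h := hexp1 w ![0,0,1]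
    have h' := hanti ![0,0,1] w
    have hx := hanti ![1,0,0] ![0,0,1]
    have hz := hself ![0,0,1]
    linear_combination h' - h - w 0 * hx - w 2 * hz + w 1 * hb0.symm
  set n : ℝ := ξ 0 ^ 2 + ξ 1 ^ 2 + ξ 2 ^ 2 with hndef
  set ρ₀ : ℝ := (b0 * ξ 0 + b1 * ξ 1 + b2 * ξ 2) / n with hρ₀
  set γ0 : ℝ := ρ₀ * ξ 0 - b0 with hγ0
  set γ1 : ℝ := ρ₀ * ξ 1 - b1 with hγ1
  set γ2 : ℝ := ρ₀ * ξ 2 - b2 with hγ2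
  set a0 : ℝ := (γ1 * ξ 2 - γ2 * ξ 1) / n + s * ξ 0 / (c * n) with ha0
  set a1 : ℝ := (γ2 * ξ 0 - γ0 * ξ 2) / n + s * ξ 1 / (c * n) with ha1
  set a2 : ℝ := (γ0 * ξ 1 - γ1 * ξ 0) / n + s * ξ 2 / (c * n) with ha2
  refine ⟨(![a0, a1, a2], ρ₀), ?_, ?_⟩
  · intro v w
    rw [hexp1, f0, f1, f2]
    simp only [wedge3, volContract, Matrix.det_fin_three, dotProduct, Fin.sum_univ_three,
      Matrix.of_apply, Matrix.cons_val_zero, Matrix.cons_val_one, Matrix.head_cons,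
      Matrix.cons_val_two, Matrix.tail_cons, Matrix.head_fin_const]
    rw [ha0, ha1, ha2, hγ0, hγ1, hγ2, hρ₀]
    field_simp
    ring
  · simp only [dotProduct, Fin.sum_univ_three, Matrix.cons_val_zero, Matrix.cons_val_one,
      Matrix.head_cons, Matrix.cons_val_two, Matrix.tail_cons]
    rw [ha0, ha1, ha2, hγ0, hγ1, hγ2, hρ₀]
    field_simp
    ring

/-- for `ξ ≠ 0` in ℝ³ and `c > 0`, if the 2-form
`−ξ ∧ α + ι_ξ(ρ̇·vol)` vanishes and `c·⟨ξ, α⟩ = 0`, then `α = 0` and `ρ̇ = 0`.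
Consequently the linear map `(α, ρ̇) ↦ (−ξ∧α + ι_ξ(ρ̇·vol), c·⟨ξ,α⟩)` from
`ℝ³ ⊕ ℝ` to `Λ²(ℝ³)* ⊕ ℝ` (2-forms realized as antisymmetric bilinear functions)
is a linear isomorphism, i.e. injective and surjective onto such pairs. -/
theorem stmt1 (ξ α : Fin 3 → ℝ) (ρ c : ℝ) (hξ : ξ ≠ 0) (hc : 0 < c)
    (hvanish : ∀ v w, -wedge3 ξ α v w + ρ * volContract ξ v w = 0)
    (hinner : c * (ξ ⬝ᵥ α) = 0) :
    (α = 0 ∧ ρ = 0) ∧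
      Function.Injective (fun p : (Fin 3 → ℝ) × ℝ =>
        ((fun v w => -wedge3 ξ p.1 v w + p.2 * volContract ξ v w, c * (ξ ⬝ᵥ p.1)) :
          ((Fin 3 → ℝ) → (Fin 3 → ℝ) → ℝ) × ℝ)) ∧
      ∀ (B : (Fin 3 → ℝ) → (Fin 3 → ℝ) → ℝ) (s : ℝ),
        (∀ v w, B v w = -B w v) →
        (∀ (a : ℝ) (v v' w : Fin 3 → ℝ), B (a • v + v') w = a * B v w + B v' w) →
        ∃ p : (Fin 3 → ℝ) × ℝ,
          (∀ v w, -wedge3 ξ p.1 v w + p.2 * volContract ξ v w = B v w) ∧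
            c * (ξ ⬝ᵥ p.1) = s := by
  refine ⟨?_, ?_, fun B s hanti hlin => surj_lemma ξ c s hξ hc B hanti hlin⟩
  · have hin : ξ ⬝ᵥ α = 0 := by
      rcases mul_eq_zero.mp hinner with h | h
      · exact absurd h hc.ne'
      · exact h
    exact key_lemma ξ α ρ hξ hvanish hin
  · intro p q hpq
    obtain ⟨h1, h2⟩ := Prod.ext_iff.mp hpq
    have hin : ξ ⬝ᵥ (p.1 - q.1) = 0 := by
      rw [dotProduct_sub]
      have := mul_left_cancel₀ hc.ne' h2
      linarith
    have hv : ∀ v w, -wedge3 ξ (p.1 - q.1) v w + (p.2 - q.2) * volContract ξ v w = 0 := by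
      intro v w
      have h := congrFun (congrFun h1 v) w
      simp only [wedge3, sub_dotProduct] at h ⊢
      linear_combination h
    obtain ⟨hα, hρ⟩ := key_lemma ξ (p.1 - q.1) (p.2 - q.2) hξ hv hin
    exact Prod.ext (sub_eq_zero.mp hα) (sub_eq_zero.mp hρ)
end

section
/- Let X, Y be Banach spaces, X = X₁ ⊕ X₂ a direct sum decomposition, and L : X → Y bounded linear with restrictions L₁ = L|_{X₁}, L₂ = L|_{X₂}. Suppose L₁ is Fredholm (finite-dimensional kernel, closed range of finite codimension) and L is surjective. Then L admits a bounded linear right inverse. -/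
/-- let `X = X₁ ⊕ X₂` (realized as `X₁ × X₂`) and `L : X → Y` bounded
linear between Banach spaces, with `L₁ = L|_{X₁}`.  If `L₁` is Fredholm
(finite-dimensional kernel, closed range of finite codimension) and `L` is
surjective, then `L` admits a bounded linear right inverse. -/
theorem stmt3 {X₁ X₂ Y : Type*}
    [NormedAddCommGroup X₁] [NormedSpace ℝ X₁] [CompleteSpace X₁]
    [NormedAddCommGroup X₂] [NormedSpace ℝ X₂] [CompleteSpace X₂]
    [NormedAddCommGroup Y] [NormedSpace ℝ Y] [CompleteSpace Y]
    (L : X₁ × X₂ →L[ℝ] Y)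
    (L₁ : X₁ →L[ℝ] Y) (hL₁ : L₁ = L.comp (ContinuousLinearMap.inl ℝ X₁ X₂))
    (hker : FiniteDimensional ℝ (LinearMap.ker (L₁ : X₁ →ₗ[ℝ] Y)))
    (hclosed : IsClosed ((LinearMap.range (L₁ : X₁ →ₗ[ℝ] Y) : Submodule ℝ Y) : Set Y))
    (hcoker : FiniteDimensional ℝ (Y ⧸ LinearMap.range (L₁ : X₁ →ₗ[ℝ] Y)))
    (hsurj : Function.Surjective L) :
    ∃ h : Y →L[ℝ] X₁ × X₂, ∀ y, L (h y) = y := by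
  classical
  set K : Submodule ℝ X₁ := LinearMap.ker (L₁ : X₁ →ₗ[ℝ] Y) with hK
  set R : Submodule ℝ Y := LinearMap.range (L₁ : X₁ →ₗ[ℝ] Y) with hR
  -- K is finite-dimensional hence closed complemented
  have hKc : K.ClosedComplemented := Submodule.ClosedComplemented.of_finiteDimensional K
  obtain ⟨Z, hZclosed, hZcompl⟩ := hKc.exists_isClosed_isCompl
  -- R is closed of finite codimension, hence closed complemented
  have hRc : R.ClosedComplemented :=
    Submodule.ClosedComplemented.of_quotient_finiteDimensional hclosed
  obtain ⟨π, hπ⟩ := hRc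
  haveI : CompleteSpace Z := hZclosed.completeSpace_coe
  haveI : CompleteSpace R := hclosed.completeSpace_coe
  -- L₁ restricted to Z, with codomain R
  set Lz : Z →L[ℝ] R :=
    ContinuousLinearMap.codRestrict (L₁.comp Z.subtypeL) R
      (fun z => LinearMap.mem_range_self _ _) with hLz
  have hLzker : LinearMap.ker (Lz : Z →ₗ[ℝ] R) = ⊥ := by
    rw [Submodule.eq_bot_iff]
    rintro z hz
    have hz1 : (z : X₁) ∈ K := by
      have : L₁ (z : X₁) = 0 := by
        have := congrArg (Subtype.val) hz
        exact this
      simpa [hK, LinearMap.mem_ker] using this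
    have : (z : X₁) ∈ K ⊓ Z := ⟨hz1, z.2⟩
    rw [hZcompl.inf_eq_bot] at this
    exact Subtype.ext (by simpa using this)
  have hLzrange : LinearMap.range (Lz : Z →ₗ[ℝ] R) = ⊤ := by
    rw [Submodule.eq_top_iff']
    rintro ⟨y, x, hx⟩
    have hxmem : x ∈ K ⊔ Z := by rw [hZcompl.sup_eq_top]; trivial
    obtain ⟨k, hk, z, hzZ, rfl⟩ := Submodule.mem_sup.mp hxmem
    refine ⟨⟨z, hzZ⟩, ?_⟩
    apply Subtype.ext
    have hk0 : L₁ k = 0 := hk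
    simp [Lz, ← hx, map_add, hk0]; rfl
  -- continuous linear inverse of Lz by the open mapping theorem
  set e : Z ≃L[ℝ] R := ContinuousLinearEquiv.ofBijective Lz hLzker hLzrange with he
  set g : Y →L[ℝ] X₁ := Z.subtypeL.comp ((e.symm : R →L[ℝ] Z).comp π) with hg
  have hgL : ∀ y : Y, L₁ (g y) = π y := by
    intro y
    have : Lz (e.symm (π y)) = π y := e.apply_symm_apply (π y)
    have := congrArg Subtype.val this
    exact this
  -- an algebraic right inverse of L
  obtain ⟨s, hs⟩ := (L : X₁ × X₂ →ₗ[ℝ] Y).exists_rightInverse_of_surjective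
    (LinearMap.range_eq_top.mpr hsurj)
  have hs' : ∀ y : Y, L (s y) = y := fun y => congrArg (fun f => f y) hs
  -- the "cokernel" part: kernel of π
  set W : Submodule ℝ Y := LinearMap.ker (π : Y →ₗ[ℝ] R) with hW
  have hWmem : ∀ y : Y, y - (π y : Y) ∈ W := by
    intro y
    have h1 : π ((π y : Y)) = π y := hπ (π y)
    simp only [hW, LinearMap.mem_ker, ContinuousLinearMap.coe_coe, map_sub, h1, sub_self]
  -- W is finite-dimensional: it embeds into Y ⧸ R
  haveI hWfin : FiniteDimensional ℝ W := by
    have hinj : Function.Injective ((R.mkQ).comp W.subtype) := by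
      intro a b hab
      have hab' : (a : Y) - (b : Y) ∈ R := by
        rwa [LinearMap.comp_apply, LinearMap.comp_apply, Submodule.mkQ_apply,
          Submodule.mkQ_apply, Submodule.Quotient.eq] at hab
      have ha : π (a : Y) = 0 := a.2
      have hb : π (b : Y) = 0 := b.2
      have h2 : π ((a : Y) - (b : Y)) = ⟨(a : Y) - (b : Y), hab'⟩ := hπ ⟨_, hab'⟩
      have h3 : π ((a : Y) - (b : Y)) = 0 := by rw [map_sub, ha, hb, sub_zero]
      have h4 : ((a : Y) - (b : Y)) = 0 := by
        have := h2.symm.trans h3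
        simpa using congrArg Subtype.val this
      exact Subtype.ext (sub_eq_zero.mp h4)
    exact FiniteDimensional.of_injective ((R.mkQ).comp W.subtype) hinj
  -- continuous map from W into X via s
  set sW : W →L[ℝ] X₁ × X₂ := LinearMap.toContinuousLinearMap (s.comp W.subtype) with hsW
  -- projection Y → W
  have hπW : ∀ y : Y, L (sW ⟨y - (π y : Y), hWmem y⟩) = y - (π y : Y) := by
    intro y
    simp [hsW, hs']
  set pW : Y →L[ℝ] W :=
    ContinuousLinearMap.codRestrict
      (ContinuousLinearMap.id ℝ Y - R.subtypeL.comp π) W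
      (fun y => by simpa using hWmem y) with hpW
  refine ⟨(ContinuousLinearMap.inl ℝ X₁ X₂).comp g + sW.comp pW, ?_⟩
  intro y
  have h1 : L ((ContinuousLinearMap.inl ℝ X₁ X₂) (g y)) = π y := by
    have := hgL y
    rw [hL₁] at this
    simpa using this
  have h2 : L (sW (pW y)) = y - (π y : Y) := by
    have hval : (pW y : Y) = y - (π y : Y) := by simp [hpW]
    have : pW y = ⟨y - (π y : Y), hWmem y⟩ := Subtype.ext hval
    rw [this]; exact hπW y
  simp only [ContinuousLinearMap.add_apply, ContinuousLinearMap.coe_comp',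
    Function.comp_apply, map_add, h1, h2]
  abel
end

section
/- Let (L, g) be a compact oriented Riemannian 3-manifold. With L⁰ as above, the cokernel of L⁰ in Ω²(L) ⊕ d†Ω¹(L) is isomorphic to ℋ²(L): precisely, the range of L⁰ equals (ℋ²(L))^⊥ ⊕ d†Ω¹(L), where (ℋ²)^⊥ = dΩ¹ ⊕ d†Ω³ by Hodge theory. -/
/-- on a compact oriented Riemannian 3-manifold, the range of
`L⁰(α, ρ̇) = (−dα − d†ρ̇, d†α)` (with `ρ̇ ⊥ ℋ³`) equals `(ℋ²)^⊥ ⊕ d†Ω¹`, where by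
Hodge theory `(ℋ²)^⊥ = dΩ¹ ⊕ d†Ω³`; hence `coker L⁰ ≅ ℋ²(L)`.  Formalized in the
abstract Hodge setting, with the required Hodge-theoretic inputs as hypotheses:
adjointness of `d` and `d†`, `d∘d = 0`, solvability of the Neumann problem
`Δζ = δ₁(d₀ζ) = u` for `u ⊥ ker d₀` (constants), and the Hodge decomposition of
3-forms into a harmonic part (`ker δ₃`) and its orthogonal complement. -/
theorem stmt16 {Ω0 Ω1 Ω2 Ω3 : Type*}
    [NormedAddCommGroup Ω0] [InnerProductSpace ℝ Ω0]
    [NormedAddCommGroup Ω1] [InnerProductSpace ℝ Ω1]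
    [NormedAddCommGroup Ω2] [InnerProductSpace ℝ Ω2]
    [NormedAddCommGroup Ω3] [InnerProductSpace ℝ Ω3]
    (d0 : Ω0 →ₗ[ℝ] Ω1) (d1 : Ω1 →ₗ[ℝ] Ω2) (d2 : Ω2 →ₗ[ℝ] Ω3)
    (δ1 : Ω1 →ₗ[ℝ] Ω0) (δ2 : Ω2 →ₗ[ℝ] Ω1) (δ3 : Ω3 →ₗ[ℝ] Ω2)
    (hadj0 : ∀ (ζ : Ω0) (α : Ω1), (inner ℝ (d0 ζ) α : ℝ) = inner ℝ ζ (δ1 α))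
    (hadj1 : ∀ (α : Ω1) (β : Ω2), (inner ℝ (d1 α) β : ℝ) = inner ℝ α (δ2 β))
    (hadj2 : ∀ (β : Ω2) (ρ : Ω3), (inner ℝ (d2 β) ρ : ℝ) = inner ℝ β (δ3 ρ))
    (hdd0 : ∀ ζ : Ω0, d1 (d0 ζ) = 0)
    (hdd1 : ∀ α : Ω1, d2 (d1 α) = 0)
    (hlap : ∀ u : Ω0, (∀ ζ : Ω0, d0 ζ = 0 → (inner ℝ u ζ : ℝ) = 0) →
      ∃ ζ : Ω0, δ1 (d0 ζ) = u)
    (hhodge3 : ∀ σ : Ω3, ∃ h σ' : Ω3, δ3 h = 0 ∧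
      (∀ h' : Ω3, δ3 h' = 0 → (inner ℝ σ' h' : ℝ) = 0) ∧ σ = h + σ') :
    {z : Ω2 × Ω0 | ∃ (α : Ω1) (ρ : Ω3),
        (∀ h : Ω3, δ3 h = 0 → (inner ℝ ρ h : ℝ) = 0) ∧
        z = (-(d1 α) - δ3 ρ, δ1 α)} =
      {z : Ω2 × Ω0 | (∃ (η : Ω1) (σ : Ω3), z.1 = d1 η + δ3 σ) ∧
        ∃ τ : Ω1, z.2 = δ1 τ} := by
  ext z
  simp only [Set.mem_setOf_eq]
  constructor
  · rintro ⟨α, ρ, hρ, rfl⟩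
    refine ⟨⟨-α, -ρ, by simp; abel⟩, α, rfl⟩
  · rintro ⟨⟨η, σ, h1⟩, τ, h2⟩
    obtain ⟨h, σ', hh, hσ', hs⟩ := hhodge3 σ
    obtain ⟨ζ, hζ⟩ := hlap (δ1 (τ + η)) (fun ζ hz => by
      have := hadj0 ζ (τ + η)
      rw [hz] at this
      simp only [inner_zero_left] at this
      rw [real_inner_comm, ← this])
    refine ⟨-η + d0 ζ, -σ', fun h' hh' => by
      rw [inner_neg_left, hσ' h' hh', neg_zero], ?_⟩
    have hd1 : d1 (-η + d0 ζ) = -(d1 η) := by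
      simp [hdd0]
    have hδ1 : δ1 (-η + d0 ζ) = δ1 τ := by
      simp only [map_add, map_neg, hζ, map_add]
      abel
    have hδ3 : δ3 σ' = δ3 σ := by
      rw [hs]; simp [hh]
    ext <;> simp [hd1, hδ1, hδ3, h1, h2] <;> abel
end
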